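/- Over Q, the simplest quartic polynomials h_2(X) = X^4 - 2X^3 - 6X^2 + 2X + 1 and h_22(X) = X^4 - 22X^3 - 6X^2 + 22X + 1 have the same splitting field. -/

import Mathlib

/-!
If `x = tan θ`, then `h_n(x) = 0` iff `tan 4θ = -4/n`. Since `tan 3α = -2/11` when `tan α = -2`,
the substitution `θ ↦ 3θ + π/2` carries the roots of `h_2` to those of `h_22`; on the roots of
`h_2` it is the polynomial map `x ↦ -x³ + 4x² - 2x` (this is `-cot 3θ` reduced modulo `h_2`),
with inverse `y ↦ (12 - 42y + 24y² - y³)/25` on the roots of `h_22`. So each splitting field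
contains the roots of the other polynomial.
-/

open Polynomial

theorem IntermediateField.adjoin_rootSet_le_of_forall_aeval {F K : Type*} [Field F] [Field K]
    [Algebra F K] {p q : F[X]} (φ ψ : F[X]) (hq : q ≠ 0)
    (h : ∀ x : K, aeval x p = 0 → aeval (aeval x φ) q = 0 ∧ aeval (aeval x φ) ψ = x) :
    adjoin F (p.rootSet K) ≤ adjoin F (q.rootSet K) := by
  refine adjoin_le_iff.mpr fun x hx => ?_
  obtain ⟨hroot, hinv⟩ := h x (aeval_eq_zero_of_mem_rootSet hx)
  have hmem : aeval x φ ∈ adjoin F (q.rootSet K) :=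
    subset_adjoin F _ ((mem_rootSet_of_ne hq).mpr hroot)
  rw [← hinv]
  exact aeval_coe _ ⟨_, hmem⟩ ψ ▸ SetLike.coe_mem _

noncomputable def simplestQuartic (n : ℚ) : ℚ[X] :=
  X ^ 4 - C n * X ^ 3 - 6 * X ^ 2 + C n * X + 1

theorem simplestQuartic_ne_zero (n : ℚ) : simplestQuartic n ≠ 0 := fun h => by
  simpa [simplestQuartic] using congr_arg (eval 0) h

noncomputable def rootMap2To22 : ℚ[X] := -X ^ 3 + 4 * X ^ 2 - 2 * X

noncomputable def rootMap22To2 : ℚ[X] := C (1 / 25) * (12 - 42 * X + 24 * X ^ 2 - X ^ 3)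

section

variable {K : Type*} [Field K] [Algebra ℚ K]

theorem aeval_simplestQuartic (n : ℚ) (x : K) :
    aeval x (simplestQuartic n) =
      x ^ 4 - algebraMap ℚ K n * x ^ 3 - 6 * x ^ 2 + algebraMap ℚ K n * x + 1 := by
  simp only [simplestQuartic, map_add, map_sub, map_mul, map_pow, aeval_X, aeval_C, map_ofNat,
    map_one]

theorem aeval_rootMap2To22 (x : K) : aeval x rootMap2To22 = -x ^ 3 + 4 * x ^ 2 - 2 * x := by
  simp only [rootMap2To22, map_add, map_sub, map_neg, map_mul, map_pow, aeval_X, map_ofNat]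

theorem aeval_rootMap22To2 (y : K) :
    aeval y rootMap22To2 = (12 - 42 * y + 24 * y ^ 2 - y ^ 3) / 25 := by
  simp only [rootMap22To2, map_add, map_sub, map_mul, map_pow, aeval_X, aeval_C, map_ofNat,
    map_div₀, map_one]
  ring

theorem rootMap2To22_spec {x : K} (hx : aeval x (simplestQuartic 2) = 0) :
    aeval (aeval x rootMap2To22) (simplestQuartic 22) = 0 ∧
      aeval (aeval x rootMap2To22) rootMap22To2 = x := by
  have : CharZero K := charZero_of_injective_algebraMap (algebraMap ℚ K).injective
  rw [aeval_simplestQuartic, map_ofNat] at hx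
  rw [aeval_rootMap2To22, aeval_simplestQuartic, aeval_rootMap22To2, map_ofNat]
  constructor
  · linear_combination (x ^ 8 - 14 * x ^ 7 + 82 * x ^ 6 - 252 * x ^ 5 + 415 * x ^ 4 - 348 * x ^ 3
      + 162 * x ^ 2 - 46 * x + 1) * hx
  · linear_combination (x ^ 5 - 10 * x ^ 4 + 40 * x ^ 3 - 70 * x ^ 2 + 35 * x + 12) / 25 * hx

theorem rootMap22To2_spec {y : K} (hy : aeval y (simplestQuartic 22) = 0) :
    aeval (aeval y rootMap22To2) (simplestQuartic 2) = 0 ∧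
      aeval (aeval y rootMap22To2) rootMap2To22 = y := by
  have : CharZero K := charZero_of_injective_algebraMap (algebraMap ℚ K).injective
  rw [aeval_simplestQuartic, map_ofNat] at hy
  rw [aeval_rootMap22To2, aeval_simplestQuartic, aeval_rootMap2To22, map_ofNat]
  constructor
  · linear_combination (y ^ 8 - 74 * y ^ 7 + 2002 * y ^ 6 - 23812 * y ^ 5 + 122295 * y ^ 4
      - 323108 * y ^ 3 + 495562 * y ^ 2 - 434746 * y + 159961) / 390625 * hy
  · linear_combination (y ^ 5 - 50 * y ^ 4 + 760 * y ^ 3 - 3410 * y ^ 2 + 5435 * y - 2328)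
      / 15625 * hy

end

/-- The simplest quartics `h₂(X) = X⁴-2X³-6X²+2X+1` and
`h₂₂(X) = X⁴-22X³-6X²+22X+1` have the same splitting field over `ℚ`. -/
theorem simplest_quartic_2_22 :
    IntermediateField.adjoin ℚ
        ((X ^ 4 - 2 * X ^ 3 - 6 * X ^ 2 + 2 * X + 1 : ℚ[X]).rootSet
          (AlgebraicClosure ℚ)) =
      IntermediateField.adjoin ℚ
        ((X ^ 4 - 22 * X ^ 3 - 6 * X ^ 2 + 22 * X + 1 : ℚ[X]).rootSet
          (AlgebraicClosure ℚ)) :=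
  le_antisymm
    (IntermediateField.adjoin_rootSet_le_of_forall_aeval (p := simplestQuartic 2) _ _
      (simplestQuartic_ne_zero 22) fun _ => rootMap2To22_spec)
    (IntermediateField.adjoin_rootSet_le_of_forall_aeval (p := simplestQuartic 22) _ _
      (simplestQuartic_ne_zero 2) fun _ => rootMap22To2_spec)
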